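/- arXiv:2404.04612 — 3 statements merged into one kernel-verified Lean document; each statement's English description precedes it below -/
import Mathlib

section
/- Let $\mathcal{G}$ be the graph on vertices $\{0,\ldots,7\}$ consisting of the 8-cycle plus the chord $\{0,3\}$, and let $\mathcal{G}^-$ be the plain 8-cycle. Then the spectral gap of $\mathcal{G}^-$ (which equals $1 - \cos(\pi/4) = 1 - \sqrt{2}/2$) is strictly greater than the spectral gap of $\mathcal{G}$, i.e., deleting the edge $\{0,3\}$ increases the spectral gap of the normalized Laplacian. -/
open Real

/-- Adjacency matrix of the undirected graph on `Fin 8` given by an edge list. -/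
noncomputable def adjOfList (E : List (Fin 8 × Fin 8)) : Matrix (Fin 8) (Fin 8) ℝ :=
  Matrix.of fun i j => if (i, j) ∈ E ∨ (j, i) ∈ E then 1 else 0

/-- Edges of the 8-cycle `0–1–⋯–7–0`. -/
def cycle8E : List (Fin 8 × Fin 8) :=
  [(0,1),(1,2),(2,3),(3,4),(4,5),(5,6),(6,7),(7,0)]

/-- Normalized Laplacian `I - D^{-1/2} A D^{-1/2}` of an adjacency matrix `A`. -/
noncomputable def normLap (A : Matrix (Fin 8) (Fin 8) ℝ) : Matrix (Fin 8) (Fin 8) ℝ :=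
  1 - Matrix.of fun i j =>
    A i j / (Real.sqrt (∑ k, A i k) * Real.sqrt (∑ k, A j k))

/-- Spectral gap: the smallest nonzero eigenvalue of a (symmetric) matrix `L`. -/
noncomputable def spectralGap (L : Matrix (Fin 8) (Fin 8) ℝ) : ℝ :=
  sInf {μ : ℝ | μ ≠ 0 ∧ ∃ v : Fin 8 → ℝ, v ≠ 0 ∧ L.mulVec v = μ • v}

lemma vec8_0 {α : Type*} (a b c d e f g h : α) : ![a,b,c,d,e,f,g,h] 0 = a := rfl
lemma vec8_1 {α : Type*} (a b c d e f g h : α) : ![a,b,c,d,e,f,g,h] 1 = b := rfl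
lemma vec8_2 {α : Type*} (a b c d e f g h : α) : ![a,b,c,d,e,f,g,h] 2 = c := rfl
lemma vec8_3 {α : Type*} (a b c d e f g h : α) : ![a,b,c,d,e,f,g,h] 3 = d := rfl
lemma vec8_4 {α : Type*} (a b c d e f g h : α) : ![a,b,c,d,e,f,g,h] 4 = e := rfl
lemma vec8_5 {α : Type*} (a b c d e f g h : α) : ![a,b,c,d,e,f,g,h] 5 = f := rfl
lemma vec8_6 {α : Type*} (a b c d e f g h : α) : ![a,b,c,d,e,f,g,h] 6 = g := rfl
lemma vec8_7 {α : Type*} (a b c d e f g h : α) : ![a,b,c,d,e,f,g,h] 7 = h := rfl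
lemma vec8m_0 {α : Type*} (a b c d e f g h : α) (hk : 0 < 8) : ![a,b,c,d,e,f,g,h] ⟨0,hk⟩ = a := rfl
lemma vec8m_1 {α : Type*} (a b c d e f g h : α) (hk : 1 < 8) : ![a,b,c,d,e,f,g,h] ⟨1,hk⟩ = b := rfl
lemma vec8m_2 {α : Type*} (a b c d e f g h : α) (hk : 2 < 8) : ![a,b,c,d,e,f,g,h] ⟨2,hk⟩ = c := rfl
lemma vec8m_3 {α : Type*} (a b c d e f g h : α) (hk : 3 < 8) : ![a,b,c,d,e,f,g,h] ⟨3,hk⟩ = d := rfl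
lemma vec8m_4 {α : Type*} (a b c d e f g h : α) (hk : 4 < 8) : ![a,b,c,d,e,f,g,h] ⟨4,hk⟩ = e := rfl
lemma vec8m_5 {α : Type*} (a b c d e f g h : α) (hk : 5 < 8) : ![a,b,c,d,e,f,g,h] ⟨5,hk⟩ = f := rfl
lemma vec8m_6 {α : Type*} (a b c d e f g h : α) (hk : 6 < 8) : ![a,b,c,d,e,f,g,h] ⟨6,hk⟩ = g := rfl
lemma vec8m_7 {α : Type*} (a b c d e f g h : α) (hk : 7 < 8) : ![a,b,c,d,e,f,g,h] ⟨7,hk⟩ = h := rfl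

noncomputable def AC : Matrix (Fin 8) (Fin 8) ℝ :=
  !![0,1,0,0,0,0,0,1;
     1,0,1,0,0,0,0,0;
     0,1,0,1,0,0,0,0;
     0,0,1,0,1,0,0,0;
     0,0,0,1,0,1,0,0;
     0,0,0,0,1,0,1,0;
     0,0,0,0,0,1,0,1;
     1,0,0,0,0,0,1,0]

noncomputable def AG : Matrix (Fin 8) (Fin 8) ℝ :=
  !![0,1,0,1,0,0,0,1;
     1,0,1,0,0,0,0,0;
     0,1,0,1,0,0,0,0;
     1,0,1,0,1,0,0,0;
     0,0,0,1,0,1,0,0;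
     0,0,0,0,1,0,1,0;
     0,0,0,0,0,1,0,1;
     1,0,0,0,0,0,1,0]

lemma adjC : adjOfList cycle8E = AC := by
  ext i j
  fin_cases i <;> fin_cases j <;>
    simp only [adjOfList, Matrix.of_apply, AC,
      vec8_0, vec8_1, vec8_2, vec8_3, vec8_4, vec8_5, vec8_6, vec8_7] <;>
    (first
      | rw [if_pos (by decide)]
      | rw [if_neg (by decide)]) <;> rfl

lemma adjG : adjOfList (cycle8E ++ [(0,3)]) = AG := by
  ext i j
  fin_cases i <;> fin_cases j <;>
    simp only [adjOfList, List.cons_append, List.nil_append, Matrix.of_apply, AG,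
      vec8_0, vec8_1, vec8_2, vec8_3, vec8_4, vec8_5, vec8_6, vec8_7] <;>
    (first
      | rw [if_pos (by decide)]
      | rw [if_neg (by decide)]) <;> rfl

lemma sq2 : Real.sqrt 2 * Real.sqrt 2 = 2 := Real.mul_self_sqrt (by norm_num)
lemma sq3 : Real.sqrt 3 * Real.sqrt 3 = 3 := Real.mul_self_sqrt (by norm_num)
lemma sq13 : Real.sqrt 13 * Real.sqrt 13 = 13 := Real.mul_self_sqrt (by norm_num)

noncomputable def LC : Matrix (Fin 8) (Fin 8) ℝ :=
  !![1, -(1/2), 0, 0, 0, 0, 0, -(1/2);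
     -(1/2), 1, -(1/2), 0, 0, 0, 0, 0;
     0, -(1/2), 1, -(1/2), 0, 0, 0, 0;
     0, 0, -(1/2), 1, -(1/2), 0, 0, 0;
     0, 0, 0, -(1/2), 1, -(1/2), 0, 0;
     0, 0, 0, 0, -(1/2), 1, -(1/2), 0;
     0, 0, 0, 0, 0, -(1/2), 1, -(1/2);
     -(1/2), 0, 0, 0, 0, 0, -(1/2), 1]

lemma normLapC : normLap (adjOfList cycle8E) = LC := by
  rw [adjC]
  ext i j
  fin_cases i <;> fin_cases j <;>
    simp only [normLap, Matrix.sub_apply, Matrix.of_apply, Matrix.one_apply, Fin.sum_univ_eight,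
      AC, LC, Fin.mk.injEq,
      vec8_0, vec8_1, vec8_2, vec8_3, vec8_4, vec8_5, vec8_6, vec8_7,
      vec8m_0, vec8m_1, vec8m_2, vec8m_3, vec8m_4, vec8m_5, vec8m_6, vec8m_7] <;>
    norm_num [sq2]

lemma inv32 : (Real.sqrt 3)⁻¹ * (Real.sqrt 2)⁻¹ = Real.sqrt 3 * Real.sqrt 2 / 6 := by
  have h3 : Real.sqrt 3 ≠ 0 := by positivity
  have h2 : Real.sqrt 2 ≠ 0 := by positivity
  field_simp
  first
    | linear_combination (Real.sqrt 3 * Real.sqrt 3) * sq2 + 2 * sq3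
    | linear_combination (-(Real.sqrt 3 * Real.sqrt 3)) * sq2 - 2 * sq3
    | (ring_nf; linear_combination (Real.sqrt 3 * Real.sqrt 3) * sq2 + 2 * sq3)

lemma inv23 : (Real.sqrt 2)⁻¹ * (Real.sqrt 3)⁻¹ = Real.sqrt 3 * Real.sqrt 2 / 6 := by
  rw [mul_comm]; exact inv32

noncomputable def LG : Matrix (Fin 8) (Fin 8) ℝ :=
  !![1, -(Real.sqrt 3 * Real.sqrt 2/6), 0, -(1/3), 0, 0, 0, -(Real.sqrt 3 * Real.sqrt 2/6);
     -(Real.sqrt 3 * Real.sqrt 2/6), 1, -(1/2), 0, 0, 0, 0, 0;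
     0, -(1/2), 1, -(Real.sqrt 3 * Real.sqrt 2/6), 0, 0, 0, 0;
     -(1/3), 0, -(Real.sqrt 3 * Real.sqrt 2/6), 1, -(Real.sqrt 3 * Real.sqrt 2/6), 0, 0, 0;
     0, 0, 0, -(Real.sqrt 3 * Real.sqrt 2/6), 1, -(1/2), 0, 0;
     0, 0, 0, 0, -(1/2), 1, -(1/2), 0;
     0, 0, 0, 0, 0, -(1/2), 1, -(1/2);
     -(Real.sqrt 3 * Real.sqrt 2/6), 0, 0, 0, 0, 0, -(1/2), 1]

lemma normLapG : normLap (adjOfList (cycle8E ++ [(0,3)])) = LG := by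
  rw [adjG]
  ext i j
  fin_cases i <;> fin_cases j <;>
    simp only [normLap, Matrix.sub_apply, Matrix.of_apply, Matrix.one_apply, Fin.sum_univ_eight,
      AG, LG, Fin.mk.injEq,
      vec8_0, vec8_1, vec8_2, vec8_3, vec8_4, vec8_5, vec8_6, vec8_7,
      vec8m_0, vec8m_1, vec8m_2, vec8m_3, vec8m_4, vec8m_5, vec8m_6, vec8m_7] <;>
    norm_num [sq2, sq3, inv32, inv23]

noncomputable def LCp2 : Matrix (Fin 8) (Fin 8) ℝ :=
  !![(3/2),(-1),(1/4),0,0,0,(1/4),(-1);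
     (-1),(3/2),(-1),(1/4),0,0,0,(1/4);
     (1/4),(-1),(3/2),(-1),(1/4),0,0,0;
     0,(1/4),(-1),(3/2),(-1),(1/4),0,0;
     0,0,(1/4),(-1),(3/2),(-1),(1/4),0;
     0,0,0,(1/4),(-1),(3/2),(-1),(1/4);
     (1/4),0,0,0,(1/4),(-1),(3/2),(-1);
     (-1),(1/4),0,0,0,(1/4),(-1),(3/2)]

noncomputable def LCp3 : Matrix (Fin 8) (Fin 8) ℝ :=
  !![(5/2),(-15/8),(3/4),(-1/8),0,(-1/8),(3/4),(-15/8);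
     (-15/8),(5/2),(-15/8),(3/4),(-1/8),0,(-1/8),(3/4);
     (3/4),(-15/8),(5/2),(-15/8),(3/4),(-1/8),0,(-1/8);
     (-1/8),(3/4),(-15/8),(5/2),(-15/8),(3/4),(-1/8),0;
     0,(-1/8),(3/4),(-15/8),(5/2),(-15/8),(3/4),(-1/8);
     (-1/8),0,(-1/8),(3/4),(-15/8),(5/2),(-15/8),(3/4);
     (3/4),(-1/8),0,(-1/8),(3/4),(-15/8),(5/2),(-15/8);
     (-15/8),(3/4),(-1/8),0,(-1/8),(3/4),(-15/8),(5/2)]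

noncomputable def LCp4 : Matrix (Fin 8) (Fin 8) ℝ :=
  !![(35/8),(-7/2),(7/4),(-1/2),(1/8),(-1/2),(7/4),(-7/2);
     (-7/2),(35/8),(-7/2),(7/4),(-1/2),(1/8),(-1/2),(7/4);
     (7/4),(-7/2),(35/8),(-7/2),(7/4),(-1/2),(1/8),(-1/2);
     (-1/2),(7/4),(-7/2),(35/8),(-7/2),(7/4),(-1/2),(1/8);
     (1/8),(-1/2),(7/4),(-7/2),(35/8),(-7/2),(7/4),(-1/2);
     (-1/2),(1/8),(-1/2),(7/4),(-7/2),(35/8),(-7/2),(7/4);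
     (7/4),(-1/2),(1/8),(-1/2),(7/4),(-7/2),(35/8),(-7/2);
     (-7/2),(7/4),(-1/2),(1/8),(-1/2),(7/4),(-7/2),(35/8)]

noncomputable def LCp5 : Matrix (Fin 8) (Fin 8) ℝ :=
  !![(63/8),(-105/16),(15/4),(-23/16),(5/8),(-23/16),(15/4),(-105/16);
     (-105/16),(63/8),(-105/16),(15/4),(-23/16),(5/8),(-23/16),(15/4);
     (15/4),(-105/16),(63/8),(-105/16),(15/4),(-23/16),(5/8),(-23/16);
     (-23/16),(15/4),(-105/16),(63/8),(-105/16),(15/4),(-23/16),(5/8);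
     (5/8),(-23/16),(15/4),(-105/16),(63/8),(-105/16),(15/4),(-23/16);
     (-23/16),(5/8),(-23/16),(15/4),(-105/16),(63/8),(-105/16),(15/4);
     (15/4),(-23/16),(5/8),(-23/16),(15/4),(-105/16),(63/8),(-105/16);
     (-105/16),(15/4),(-23/16),(5/8),(-23/16),(15/4),(-105/16),(63/8)]

set_option maxHeartbeats 1000000 in
lemma mul_LCp2 : LC * LC = LCp2 := by
  ext i j
  fin_cases i <;> fin_cases j <;>
    (rw [Matrix.mul_apply, Fin.sum_univ_eight]
     simp only [LC, LC, LCp2, Matrix.of_apply, vec8_0, vec8_1, vec8_2, vec8_3, vec8_4, vec8_5, vec8_6, vec8_7, vec8m_0, vec8m_1, vec8m_2, vec8m_3, vec8m_4, vec8m_5, vec8m_6, vec8m_7]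
     norm_num)

set_option maxHeartbeats 1000000 in
lemma mul_LCp3 : LC * LCp2 = LCp3 := by
  ext i j
  fin_cases i <;> fin_cases j <;>
    (rw [Matrix.mul_apply, Fin.sum_univ_eight]
     simp only [LC, LCp2, LCp3, Matrix.of_apply, vec8_0, vec8_1, vec8_2, vec8_3, vec8_4, vec8_5, vec8_6, vec8_7, vec8m_0, vec8m_1, vec8m_2, vec8m_3, vec8m_4, vec8m_5, vec8m_6, vec8m_7]
     norm_num)

set_option maxHeartbeats 1000000 in
lemma mul_LCp4 : LC * LCp3 = LCp4 := by
  ext i j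
  fin_cases i <;> fin_cases j <;>
    (rw [Matrix.mul_apply, Fin.sum_univ_eight]
     simp only [LC, LCp3, LCp4, Matrix.of_apply, vec8_0, vec8_1, vec8_2, vec8_3, vec8_4, vec8_5, vec8_6, vec8_7, vec8m_0, vec8m_1, vec8m_2, vec8m_3, vec8m_4, vec8m_5, vec8m_6, vec8m_7]
     norm_num)

set_option maxHeartbeats 1000000 in
lemma mul_LCp5 : LC * LCp4 = LCp5 := by
  ext i j
  fin_cases i <;> fin_cases j <;>
    (rw [Matrix.mul_apply, Fin.sum_univ_eight]
     simp only [LC, LCp4, LCp5, Matrix.of_apply, vec8_0, vec8_1, vec8_2, vec8_3, vec8_4, vec8_5, vec8_6, vec8_7, vec8m_0, vec8m_1, vec8m_2, vec8m_3, vec8m_4, vec8m_5, vec8m_6, vec8m_7]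
     norm_num)

set_option maxHeartbeats 1000000 in
lemma LC_poly :
    LC * (LC * (LC * (LC * LC))) - (5:ℝ) • (LC * (LC * (LC * LC))) + (17/2:ℝ) • (LC * (LC * LC))
      - (11/2:ℝ) • (LC * LC) + LC = 0 := by
  rw [mul_LCp2, mul_LCp3, mul_LCp4, mul_LCp5]
  ext i j
  fin_cases i <;> fin_cases j <;>
    (simp only [Matrix.sub_apply, Matrix.add_apply, Matrix.smul_apply, Matrix.zero_apply,
      smul_eq_mul, LC, LCp2, LCp3, LCp4, LCp5, Matrix.of_apply, vec8_0, vec8_1, vec8_2, vec8_3, vec8_4, vec8_5, vec8_6, vec8_7, vec8m_0, vec8m_1, vec8m_2, vec8m_3, vec8m_4, vec8m_5, vec8m_6, vec8m_7]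
     norm_num)

lemma LC_eig_cases {μ : ℝ} {v : Fin 8 → ℝ} (hv : v ≠ 0) (h : LC.mulVec v = μ • v) :
    μ = 0 ∨ μ = 1 ∨ μ = 2 ∨ (μ - 1)^2 = 1/2 := by
  obtain ⟨j, hj⟩ : ∃ j, v j ≠ 0 := Function.ne_iff.mp hv
  have key := congrArg (fun M : Matrix (Fin 8) (Fin 8) ℝ => M.mulVec v j) LC_poly
  simp only [Matrix.sub_mulVec, Matrix.add_mulVec, Matrix.smul_mulVec,
    Matrix.zero_mulVec, ← Matrix.mulVec_mulVec, h, Matrix.mulVec_smul,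
    Pi.add_apply, Pi.sub_apply, Pi.smul_apply, Pi.zero_apply, smul_eq_mul] at key
  have hq : (μ^5 - 5*μ^4 + 17/2*μ^3 - 11/2*μ^2 + μ) * v j = 0 := by linear_combination key
  have hq2 : μ^5 - 5*μ^4 + 17/2*μ^3 - 11/2*μ^2 + μ = 0 :=
    (mul_eq_zero.mp hq).resolve_right hj
  have hfact : μ * ((μ - 1) * ((μ - 2) * ((μ - 1)^2 - 1/2))) = 0 := by linear_combination hq2
  rcases mul_eq_zero.mp hfact with h0 | h1
  · exact Or.inl h0
  rcases mul_eq_zero.mp h1 with ha | h2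
  · exact Or.inr (Or.inl (by linarith [sub_eq_zero.mp ha]))
  rcases mul_eq_zero.mp h2 with hb | hc
  · exact Or.inr (Or.inr (Or.inl (by linarith [sub_eq_zero.mp hb])))
  · exact Or.inr (Or.inr (Or.inr (by linarith)))

lemma memC : (1 - Real.sqrt 2 / 2) ≠ 0 ∧
    ∃ v : Fin 8 → ℝ, v ≠ 0 ∧ LC.mulVec v = (1 - Real.sqrt 2 / 2) • v := by
  have hs : (0:ℝ) ≤ Real.sqrt 2 := Real.sqrt_nonneg 2
  refine ⟨by nlinarith [sq2], ![2, Real.sqrt 2, 0, -Real.sqrt 2, -2, -Real.sqrt 2, 0, Real.sqrt 2],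
    fun hc => by simpa using congrFun hc 0, ?_⟩
  funext i
  fin_cases i <;>
    simp only [Matrix.mulVec, dotProduct, Fin.sum_univ_eight, LC, Matrix.of_apply,
      Pi.smul_apply, smul_eq_mul,
      vec8_0, vec8_1, vec8_2, vec8_3, vec8_4, vec8_5, vec8_6, vec8_7,
      vec8m_0, vec8m_1, vec8m_2, vec8m_3, vec8m_4, vec8m_5, vec8m_6, vec8m_7] <;>
    first
      | ring1
      | linear_combination (1/2 : ℝ) * sq2
      | linear_combination (-(1/2) : ℝ) * sq2

lemma memG : ((7 - Real.sqrt 13) / 12) ≠ 0 ∧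
    ∃ v : Fin 8 → ℝ, v ≠ 0 ∧ LG.mulVec v = ((7 - Real.sqrt 13) / 12) • v := by
  have hs : (0:ℝ) ≤ Real.sqrt 13 := Real.sqrt_nonneg 13
  have h1lt : (1:ℝ) < Real.sqrt 13 := by nlinarith [sq13]
  have hlt7 : Real.sqrt 13 < 7 := by nlinarith [sq13]
  have h2pos : (0:ℝ) < Real.sqrt 2 := Real.sqrt_pos.mpr (by norm_num)
  refine ⟨ne_of_gt (by linarith), ![Real.sqrt 3*(20-8*Real.sqrt 13), Real.sqrt 2*(6*Real.sqrt 13-42),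
      Real.sqrt 2*(6*Real.sqrt 13-42), Real.sqrt 3*(20-8*Real.sqrt 13),
      Real.sqrt 2*(21-3*Real.sqrt 13), Real.sqrt 2*(9*Real.sqrt 13-9),
      Real.sqrt 2*(9*Real.sqrt 13-9), Real.sqrt 2*(21-3*Real.sqrt 13)], ?_, ?_⟩
  · intro hc
    have h5 := congrFun hc 5
    simp only [vec8_5, Pi.zero_apply] at h5
    nlinarith [h5]
  funext i
  fin_cases i <;>
    simp only [Matrix.mulVec, dotProduct, Fin.sum_univ_eight, LG, Matrix.of_apply,
      Pi.smul_apply, smul_eq_mul,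
      vec8_0, vec8_1, vec8_2, vec8_3, vec8_4, vec8_5, vec8_6, vec8_7,
      vec8m_0, vec8m_1, vec8m_2, vec8m_3, vec8m_4, vec8m_5, vec8m_6, vec8m_7]
  · linear_combination ((7/2:ℝ)*Real.sqrt 3 + (-1/2:ℝ)*Real.sqrt 3*Real.sqrt 13) * sq2 + ((-2/3:ℝ)*Real.sqrt 3) * sq13
  · linear_combination ((-10/3:ℝ)*Real.sqrt 2 + (4/3:ℝ)*Real.sqrt 2*Real.sqrt 13) * sq3 + ((1/2:ℝ)*Real.sqrt 2) * sq13
  · linear_combination ((-10/3:ℝ)*Real.sqrt 2 + (4/3:ℝ)*Real.sqrt 2*Real.sqrt 13) * sq3 + ((1/2:ℝ)*Real.sqrt 2) * sq13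
  · linear_combination ((7/2:ℝ)*Real.sqrt 3 + (-1/2:ℝ)*Real.sqrt 3*Real.sqrt 13) * sq2 + ((-2/3:ℝ)*Real.sqrt 3) * sq13
  · linear_combination ((-10/3:ℝ)*Real.sqrt 2 + (4/3:ℝ)*Real.sqrt 2*Real.sqrt 13) * sq3 + ((-1/4:ℝ)*Real.sqrt 2) * sq13
  · linear_combination ((3/4:ℝ)*Real.sqrt 2) * sq13
  · linear_combination ((3/4:ℝ)*Real.sqrt 2) * sq13
  · linear_combination ((-10/3:ℝ)*Real.sqrt 2 + (4/3:ℝ)*Real.sqrt 2*Real.sqrt 13) * sq3 + ((-1/4:ℝ)*Real.sqrt 2) * sq13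

lemma eig_lb (M : Matrix (Fin 8) (Fin 8) ℝ) {μ : ℝ} {v : Fin 8 → ℝ} (hv : v ≠ 0)
    (h : M.mulVec v = μ • v) : -(∑ i, ∑ j, |M i j|) ≤ μ := by
  obtain ⟨i, -, hi⟩ := Finset.exists_max_image (Finset.univ : Finset (Fin 8))
    (fun i => |v i|) ⟨0, Finset.mem_univ 0⟩
  obtain ⟨j0, hj0⟩ : ∃ j, v j ≠ 0 := Function.ne_iff.mp hv
  have hvi : 0 < |v i| := lt_of_lt_of_le (abs_pos.mpr hj0) (hi j0 (Finset.mem_univ _))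
  have hrow := congrFun h i
  have habs : |μ| * |v i| ≤ (∑ j, |M i j|) * |v i| := by
    calc |μ| * |v i| = |μ * v i| := (abs_mul μ (v i)).symm
      _ = |∑ j, M i j * v j| := by
          rw [show μ * v i = ∑ j, M i j * v j from by
            simp only [Pi.smul_apply, smul_eq_mul] at hrow
            rw [← hrow]; simp [Matrix.mulVec, dotProduct]]
      _ ≤ ∑ j, |M i j * v j| := Finset.abs_sum_le_sum_abs _ _
      _ = ∑ j, |M i j| * |v j| := by simp [abs_mul]
      _ ≤ ∑ j, |M i j| * |v i| :=
          Finset.sum_le_sum fun j _ =>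
            mul_le_mul_of_nonneg_left (hi j (Finset.mem_univ _)) (abs_nonneg _)
      _ = (∑ j, |M i j|) * |v i| := by rw [Finset.sum_mul]
  have hmu : |μ| ≤ ∑ j, |M i j| := le_of_mul_le_mul_right habs hvi
  have hle : (∑ j, |M i j|) ≤ ∑ i', ∑ j, |M i' j| :=
    Finset.single_le_sum (f := fun i' => ∑ j, |M i' j|)
      (fun _ _ => Finset.sum_nonneg fun _ _ => abs_nonneg _) (Finset.mem_univ i)
  linarith [neg_abs_le μ, hmu.trans hle]


/-- Deleting the chord {0,3} from the 8-cycle-plus-chord graph 𝒢 strictly increases the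
spectral gap of the normalized Laplacian; the spectral gap of the plain 8-cycle 𝒢⁻ is
1 - cos (π/4) = 1 - √2/2 (Braess' paradox). -/
theorem braess_deletion :
    spectralGap (normLap (adjOfList cycle8E)) = 1 - Real.sqrt 2 / 2 ∧
    spectralGap (normLap (adjOfList (cycle8E ++ [(0,3)]))) <
      spectralGap (normLap (adjOfList cycle8E)) := by
  rw [normLapC, normLapG]
  have hs2 : (0:ℝ) ≤ Real.sqrt 2 := Real.sqrt_nonneg 2
  have hs13 : (0:ℝ) ≤ Real.sqrt 13 := Real.sqrt_nonneg 13
  have h2pos : (0:ℝ) < Real.sqrt 2 := Real.sqrt_pos.mpr (by norm_num)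
  have hlb : ∀ μ ∈ {μ : ℝ | μ ≠ 0 ∧ ∃ v : Fin 8 → ℝ, v ≠ 0 ∧ LC.mulVec v = μ • v},
      1 - Real.sqrt 2 / 2 ≤ μ := by
    rintro μ ⟨hne, v, hv, hmv⟩
    rcases LC_eig_cases hv hmv with h0 | h1 | h2c | hq
    · exact absurd h0 hne
    · nlinarith [sq2]
    · nlinarith [sq2]
    · nlinarith [sq2, sq_nonneg (μ - 1 + Real.sqrt 2 / 2)]
  have hgapC : spectralGap LC = 1 - Real.sqrt 2 / 2 := by
    apply le_antisymm
    · exact csInf_le ⟨1 - Real.sqrt 2 / 2, fun μ hμ => hlb μ hμ⟩ memC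
    · exact le_csInf ⟨_, memC⟩ hlb
  refine ⟨hgapC, ?_⟩
  rw [hgapC]
  have hle : spectralGap LG ≤ (7 - Real.sqrt 13) / 12 := by
    apply csInf_le
    · refine ⟨-(∑ i, ∑ j, |LG i j|), ?_⟩
      rintro μ ⟨-, v, hv, hmv⟩
      exact eig_lb LG hv hmv
    · exact memG
  have hlt : (7 - Real.sqrt 13) / 12 < 1 - Real.sqrt 2 / 2 := by
    nlinarith [sq2, sq13, sq_nonneg (Real.sqrt 2 - 17/12), sq_nonneg (Real.sqrt 13 - 37/10)]
  linarith
end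

section
/- Let $\mathcal{G}$ be the 8-cycle with chord $\{0,3\}$, and let $\widetilde{\mathcal{G}^+}$ be $\mathcal{G}$ with the additional edge $\{4,7\}$. Then $\lambda_1(\mathcal{L}_{\widetilde{\mathcal{G}^+}}) < \lambda_1(\mathcal{L}_{\mathcal{G}})$: adding edge $\{4,7\}$ strictly decreases the spectral gap of the normalized Laplacian. -/
open Real

set_option maxHeartbeats 4000000

private lemma inv_sqrt_two : (Real.sqrt 2)⁻¹ = Real.sqrt 2 / 2 := by
  rw [inv_eq_one_div, div_eq_div_iff (by positivity) (by norm_num : (2:ℝ) ≠ 0), one_mul,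
    Real.mul_self_sqrt (by norm_num)]

private lemma inv_sqrt_three : (Real.sqrt 3)⁻¹ = Real.sqrt 3 / 3 := by
  rw [inv_eq_one_div, div_eq_div_iff (by positivity) (by norm_num : (3:ℝ) ≠ 0), one_mul,
    Real.mul_self_sqrt (by norm_num)]

private lemma vec8_0_s6 {α : Type*} (x0 x1 x2 x3 x4 x5 x6 x7 : α) : ![x0,x1,x2,x3,x4,x5,x6,x7] (0:Fin 8) = x0 := rfl
private lemma vec8_1_s6 {α : Type*} (x0 x1 x2 x3 x4 x5 x6 x7 : α) : ![x0,x1,x2,x3,x4,x5,x6,x7] (1:Fin 8) = x1 := rfl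
private lemma vec8_2_s6 {α : Type*} (x0 x1 x2 x3 x4 x5 x6 x7 : α) : ![x0,x1,x2,x3,x4,x5,x6,x7] (2:Fin 8) = x2 := rfl
private lemma vec8_3_s6 {α : Type*} (x0 x1 x2 x3 x4 x5 x6 x7 : α) : ![x0,x1,x2,x3,x4,x5,x6,x7] (3:Fin 8) = x3 := rfl
private lemma vec8_4_s6 {α : Type*} (x0 x1 x2 x3 x4 x5 x6 x7 : α) : ![x0,x1,x2,x3,x4,x5,x6,x7] (4:Fin 8) = x4 := rfl
private lemma vec8_5_s6 {α : Type*} (x0 x1 x2 x3 x4 x5 x6 x7 : α) : ![x0,x1,x2,x3,x4,x5,x6,x7] (5:Fin 8) = x5 := rfl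
private lemma vec8_6_s6 {α : Type*} (x0 x1 x2 x3 x4 x5 x6 x7 : α) : ![x0,x1,x2,x3,x4,x5,x6,x7] (6:Fin 8) = x6 := rfl
private lemma vec8_7_s6 {α : Type*} (x0 x1 x2 x3 x4 x5 x6 x7 : α) : ![x0,x1,x2,x3,x4,x5,x6,x7] (7:Fin 8) = x7 := rfl

/-- Every nonzero eigenvalue of the normalized Laplacian of the cycle-plus-chord graph 𝒢
is at least `7/25`. -/
private lemma lowerG (μ : ℝ) (v : Fin 8 → ℝ) (hμ : μ ≠ 0) (hv0 : v ≠ 0)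
    (hv : (normLap (adjOfList (cycle8E ++ [(0,3)]))).mulVec v = μ • v) : 7/25 ≤ μ := by
  have hS : (0:ℝ) < v 0^2 + v 1^2 + v 2^2 + v 3^2 + v 4^2 + v 5^2 + v 6^2 + v 7^2 := by
    obtain ⟨i, hi⟩ := Function.ne_iff.mp hv0
    simp only [Pi.zero_apply] at hi
    have hsq : 0 < v i ^ 2 := by
      rcases hi.lt_or_gt with h | h <;> nlinarith
    have hS' : 0 < ∑ j, v j ^ 2 :=
      Finset.sum_pos' (fun j _ => sq_nonneg _) ⟨i, Finset.mem_univ i, hsq⟩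
    rw [Fin.sum_univ_eight] at hS'
    exact hS'
  have h0 := congrFun hv 0
  have h1 := congrFun hv 1
  have h2 := congrFun hv 2
  have h3 := congrFun hv 3
  have h4 := congrFun hv 4
  have h5 := congrFun hv 5
  have h6 := congrFun hv 6
  have h7 := congrFun hv 7
  simp (config := { decide := true }) only [normLap, adjOfList, cycle8E, Matrix.mulVec,
    dotProduct, Fin.sum_univ_eight, Matrix.sub_apply, Matrix.one_apply, Matrix.of_apply,
    List.cons_append, List.nil_append, List.mem_cons, List.not_mem_nil, Prod.mk.injEq,
    Pi.smul_apply, smul_eq_mul, vec8_0_s6, vec8_1_s6, vec8_2_s6, vec8_3_s6, vec8_4_s6, vec8_5_s6, vec8_6_s6, vec8_7_s6] at h0 h1 h2 h3 h4 h5 h6 h7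
  norm_num at h0 h1 h2 h3 h4 h5 h6 h7
  rw [inv_sqrt_two, inv_sqrt_three] at h0 h1 h2 h3 h4 h7
  set a := Real.sqrt 2 with ha_def
  set b := Real.sqrt 3 with hb_def
  have ha : a * a = 2 := Real.mul_self_sqrt (by norm_num)
  have hb : b * b = 3 := Real.mul_self_sqrt (by norm_num)
  have horthPre : μ * (b*v 0 + a*v 1 + a*v 2 + b*v 3 + a*v 4 + a*v 5 + a*v 6 + a*v 7) = 0 := by
    linear_combination (-b) * h0 + (-a) * h1 + (-a) * h2 + (-b) * h3 + (-a) * h4 + (-a) * h5 + (-a) * h6 + (-a) * h7 + ((-1/3:ℝ)*b*(v 3) + (-1/3:ℝ)*b*(v 0)) * ha + ((-1/6:ℝ)*a*(v 7) + (-1/6:ℝ)*a*(v 4) + (-1/6:ℝ)*a*(v 2) + (-1/6:ℝ)*a*(v 1)) * hb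
  have horth : b*v 0 + a*v 1 + a*v 2 + b*v 3 + a*v 4 + a*v 5 + a*v 6 + a*v 7 = 0 :=
    (mul_eq_zero.mp horthPre).resolve_left hμ
  have hkey : (25*μ - 7) * (v 0^2 + v 1^2 + v 2^2 + v 3^2 + v 4^2 + v 5^2 + v 6^2 + v 7^2) =
      (63:ℝ)*((b*v 0/3) + (-19/63:ℝ)*(a*v 1/2) + (2/21:ℝ)*(a*v 2/2) + (-16/63:ℝ)*(b*v 3/3) + (2/21:ℝ)*(a*v 4/2) + (2/21:ℝ)*(a*v 5/2) + (2/21:ℝ)*(a*v 6/2) + (-19/63:ℝ)*(a*v 7/2))^2 + (2159/63:ℝ)*((a*v 1/2) + (-1209/2159:ℝ)*(a*v 2/2) + (74/2159:ℝ)*(b*v 3/3) + (366/2159:ℝ)*(a*v 4/2) + (366/2159:ℝ)*(a*v 5/2) + (366/2159:ℝ)*(a*v 6/2) + (-109/2159:ℝ)*(a*v 7/2))^2 + (61925/2159:ℝ)*((a*v 2/2) + (-36311/61925:ℝ)*(b*v 3/3) + (14426/61925:ℝ)*(a*v 4/2) + (14426/61925:ℝ)*(a*v 5/2) + (14426/61925:ℝ)*(a*v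 6/2) + (10451/61925:ℝ)*(a*v 7/2))^2 + (3036456/61925:ℝ)*((b*v 3/3) + (-851921/3036456:ℝ)*(a*v 4/2) + (83/362:ℝ)*(a*v 5/2) + (83/362:ℝ)*(a*v 6/2) + (252179/3036456:ℝ)*(a*v 7/2))^2 + (100286035/3036456:ℝ)*((a*v 4/2) + (-63639756/100286035:ℝ)*(a*v 5/2) + (12271644/100286035:ℝ)*(a*v 6/2) + (18576119/100286035:ℝ)*(a*v 7/2))^2 + (2106955044/100286035:ℝ)*((a*v 5/2) + (-2419499191/2106955044:ℝ)*(a*v 6/2) + (794628409/2106955044:ℝ)*(a*v 7/2))^2 + (12873584933/2106955044:ℝ)*((a*v 6/2) + (-2414984341/1170325903:ℝ)*(a*v 7/2))^2 + (3380677157/1170325903:ℝ)*((a*v 7/2))^2 := by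
    linear_combination (-25*(v 0)) * h0 + (-25*(v 1)) * h1 + (-25*(v 2)) * h2 + (-25*(v 3)) * h3 + (-25*(v 4)) * h4 + (-25*(v 5)) * h5 + (-25*(v 6)) * h6 + (-25*(v 7)) * h7 + (-(b*v 0 + a*v 1 + a*v 2 + b*v 3 + a*v 4 + a*v 5 + a*v 6 + a*v 7)) * horth + ((-9:ℝ)*(v 7)*(v 7) + (25/2:ℝ)*(v 6)*(v 7) + (-9:ℝ)*(v 6)*(v 6) + (25/2:ℝ)*(v 5)*(v 6) + (-9:ℝ)*(v 5)*(v 5) + (25/2:ℝ)*(v 4)*(v 5) + (-9:ℝ)*(v 4)*(v 4) + (-9:ℝ)*(v 2)*(v 2) + (25/2:ℝ)*(v 1)*(v 2) + (-9:ℝ)*(v 1)*(v 1)) * ha + ((-6:ℝ)*(v 3)*(v 3) + (50/9:ℝ)*(v 0)*(v 3) + (-6:ℝ)*(v 0)*(v 0)) * hb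
  have hSOS : (0:ℝ) ≤ (25*μ - 7) * (v 0^2 + v 1^2 + v 2^2 + v 3^2 + v 4^2 + v 5^2 + v 6^2 + v 7^2) := by
    rw [hkey]; positivity
  clear h0 h1 h2 h3 h4 h5 h6 h7 horth horthPre hkey hv hv0 ha hb ha_def hb_def
  nlinarith [hSOS, hS]

/-- Every eigenvalue of the normalized Laplacian of 𝒢⁺ is nonnegative. -/
private lemma nonnegGp (μ : ℝ) (v : Fin 8 → ℝ) (hv0 : v ≠ 0)
    (hv : (normLap (adjOfList (cycle8E ++ [(0,3),(4,7)]))).mulVec v = μ • v) : 0 ≤ μ := by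
  have hS : (0:ℝ) < v 0^2 + v 1^2 + v 2^2 + v 3^2 + v 4^2 + v 5^2 + v 6^2 + v 7^2 := by
    obtain ⟨i, hi⟩ := Function.ne_iff.mp hv0
    simp only [Pi.zero_apply] at hi
    have hsq : 0 < v i ^ 2 := by
      rcases hi.lt_or_gt with h | h <;> nlinarith
    have hS' : 0 < ∑ j, v j ^ 2 :=
      Finset.sum_pos' (fun j _ => sq_nonneg _) ⟨i, Finset.mem_univ i, hsq⟩
    rw [Fin.sum_univ_eight] at hS'
    exact hS'
  have h0 := congrFun hv 0
  have h1 := congrFun hv 1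
  have h2 := congrFun hv 2
  have h3 := congrFun hv 3
  have h4 := congrFun hv 4
  have h5 := congrFun hv 5
  have h6 := congrFun hv 6
  have h7 := congrFun hv 7
  simp (config := { decide := true }) only [normLap, adjOfList, cycle8E, Matrix.mulVec,
    dotProduct, Fin.sum_univ_eight, Matrix.sub_apply, Matrix.one_apply, Matrix.of_apply,
    List.cons_append, List.nil_append, List.mem_cons, List.not_mem_nil, Prod.mk.injEq,
    Pi.smul_apply, smul_eq_mul, vec8_0_s6, vec8_1_s6, vec8_2_s6, vec8_3_s6, vec8_4_s6, vec8_5_s6, vec8_6_s6, vec8_7_s6] at h0 h1 h2 h3 h4 h5 h6 h7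
  norm_num at h0 h1 h2 h3 h4 h5 h6 h7
  rw [inv_sqrt_two, inv_sqrt_three] at h0 h1 h2 h3 h4 h5 h6 h7
  set a := Real.sqrt 2 with ha_def
  set b := Real.sqrt 3 with hb_def
  have ha : a * a = 2 := Real.mul_self_sqrt (by norm_num)
  have hb : b * b = 3 := Real.mul_self_sqrt (by norm_num)
  have hkey2 : μ * (v 0^2 + v 1^2 + v 2^2 + v 3^2 + v 4^2 + v 5^2 + v 6^2 + v 7^2) =
      (b*v 0/3 - a*v 1/2)^2 + (a*v 1/2 - a*v 2/2)^2 + (a*v 2/2 - b*v 3/3)^2 + (b*v 3/3 - b*v 4/3)^2 + (b*v 4/3 - a*v 5/2)^2 + (a*v 5/2 - a*v 6/2)^2 + (a*v 6/2 - b*v 7/3)^2 + (b*v 7/3 - b*v 0/3)^2 + (b*v 0/3 - b*v 3/3)^2 + (b*v 4/3 - b*v 7/3)^2 := by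
    linear_combination (-(v 0)) * h0 + (-(v 1)) * h1 + (-(v 2)) * h2 + (-(v 3)) * h3 + (-(v 4)) * h4 + (-(v 5)) * h5 + (-(v 6)) * h6 + (-(v 7)) * h7 + ((-1/2:ℝ)*(v 6)*(v 6) + (1/2:ℝ)*(v 5)*(v 6) + (-1/2:ℝ)*(v 5)*(v 5) + (-1/2:ℝ)*(v 2)*(v 2) + (1/2:ℝ)*(v 1)*(v 2) + (-1/2:ℝ)*(v 1)*(v 1)) * ha + ((-1/3:ℝ)*(v 7)*(v 7) + (2/9:ℝ)*(v 4)*(v 7) + (-1/3:ℝ)*(v 4)*(v 4) + (2/9:ℝ)*(v 3)*(v 4) + (-1/3:ℝ)*(v 3)*(v 3) + (2/9:ℝ)*(v 0)*(v 7) + (2/9:ℝ)*(v 0)*(v 3) + (-1/3:ℝ)*(v 0)*(v 0)) * hb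
  have hSOS : (0:ℝ) ≤ μ * (v 0^2 + v 1^2 + v 2^2 + v 3^2 + v 4^2 + v 5^2 + v 6^2 + v 7^2) := by
    rw [hkey2]; positivity
  clear h0 h1 h2 h3 h4 h5 h6 h7 hkey2 hv hv0 ha hb ha_def hb_def
  nlinarith [hSOS, hS]

/-- `2` is a nonzero eigenvalue of the normalized Laplacian of 𝒢. -/
private lemma memG2 : (2:ℝ) ≠ 0 ∧ ∃ v : Fin 8 → ℝ, v ≠ 0 ∧
    (normLap (adjOfList (cycle8E ++ [(0,3)]))).mulVec v = (2:ℝ) • v := by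
  refine ⟨by norm_num, ?_⟩
  set a := Real.sqrt 2 with ha_def
  set b := Real.sqrt 3 with hb_def
  have ha : a * a = 2 := Real.mul_self_sqrt (by norm_num)
  have hb : b * b = 3 := Real.mul_self_sqrt (by norm_num)
  have hbpos : 0 < b := Real.sqrt_pos.mpr (by norm_num)
  refine ⟨![b, -a, a, -b, a, -a, a, -a], Function.ne_iff.mpr ⟨0, by simpa using hbpos.ne'⟩, ?_⟩
  funext i
  fin_cases i
  · simp (config := { decide := true }) only [normLap, adjOfList, cycle8E, Matrix.mulVec,
    dotProduct, Fin.sum_univ_eight, Matrix.sub_apply, Matrix.one_apply, Matrix.of_apply,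
    List.cons_append, List.nil_append, List.mem_cons, List.not_mem_nil, Prod.mk.injEq,
    Pi.smul_apply, smul_eq_mul, vec8_0_s6, vec8_1_s6, vec8_2_s6, vec8_3_s6, vec8_4_s6, vec8_5_s6, vec8_6_s6, vec8_7_s6]
    norm_num
    rw [inv_sqrt_two, inv_sqrt_three]
    linear_combination ((1/3:ℝ)*b) * ha
  · simp (config := { decide := true }) only [normLap, adjOfList, cycle8E, Matrix.mulVec,
    dotProduct, Fin.sum_univ_eight, Matrix.sub_apply, Matrix.one_apply, Matrix.of_apply,
    List.cons_append, List.nil_append, List.mem_cons, List.not_mem_nil, Prod.mk.injEq,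
    Pi.smul_apply, smul_eq_mul, vec8_0_s6, vec8_1_s6, vec8_2_s6, vec8_3_s6, vec8_4_s6, vec8_5_s6, vec8_6_s6, vec8_7_s6]
    norm_num
    rw [inv_sqrt_two, inv_sqrt_three]
    linear_combination ((-1/6:ℝ)*a) * hb
  · simp (config := { decide := true }) only [normLap, adjOfList, cycle8E, Matrix.mulVec,
    dotProduct, Fin.sum_univ_eight, Matrix.sub_apply, Matrix.one_apply, Matrix.of_apply,
    List.cons_append, List.nil_append, List.mem_cons, List.not_mem_nil, Prod.mk.injEq,
    Pi.smul_apply, smul_eq_mul, vec8_0_s6, vec8_1_s6, vec8_2_s6, vec8_3_s6, vec8_4_s6, vec8_5_s6, vec8_6_s6, vec8_7_s6]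
    norm_num
    rw [inv_sqrt_two, inv_sqrt_three]
    linear_combination ((1/6:ℝ)*a) * hb
  · simp (config := { decide := true }) only [normLap, adjOfList, cycle8E, Matrix.mulVec,
    dotProduct, Fin.sum_univ_eight, Matrix.sub_apply, Matrix.one_apply, Matrix.of_apply,
    List.cons_append, List.nil_append, List.mem_cons, List.not_mem_nil, Prod.mk.injEq,
    Pi.smul_apply, smul_eq_mul, vec8_0_s6, vec8_1_s6, vec8_2_s6, vec8_3_s6, vec8_4_s6, vec8_5_s6, vec8_6_s6, vec8_7_s6]
    norm_num
    rw [inv_sqrt_two, inv_sqrt_three]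
    linear_combination ((-1/3:ℝ)*b) * ha
  · simp (config := { decide := true }) only [normLap, adjOfList, cycle8E, Matrix.mulVec,
    dotProduct, Fin.sum_univ_eight, Matrix.sub_apply, Matrix.one_apply, Matrix.of_apply,
    List.cons_append, List.nil_append, List.mem_cons, List.not_mem_nil, Prod.mk.injEq,
    Pi.smul_apply, smul_eq_mul, vec8_0_s6, vec8_1_s6, vec8_2_s6, vec8_3_s6, vec8_4_s6, vec8_5_s6, vec8_6_s6, vec8_7_s6]
    norm_num
    rw [inv_sqrt_two, inv_sqrt_three]
    linear_combination ((1/6:ℝ)*a) * hb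
  · simp (config := { decide := true }) only [normLap, adjOfList, cycle8E, Matrix.mulVec,
    dotProduct, Fin.sum_univ_eight, Matrix.sub_apply, Matrix.one_apply, Matrix.of_apply,
    List.cons_append, List.nil_append, List.mem_cons, List.not_mem_nil, Prod.mk.injEq,
    Pi.smul_apply, smul_eq_mul, vec8_0_s6, vec8_1_s6, vec8_2_s6, vec8_3_s6, vec8_4_s6, vec8_5_s6, vec8_6_s6, vec8_7_s6]
    norm_num
    linear_combination (0:ℝ)*ha
  · simp (config := { decide := true }) only [normLap, adjOfList, cycle8E, Matrix.mulVec,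
    dotProduct, Fin.sum_univ_eight, Matrix.sub_apply, Matrix.one_apply, Matrix.of_apply,
    List.cons_append, List.nil_append, List.mem_cons, List.not_mem_nil, Prod.mk.injEq,
    Pi.smul_apply, smul_eq_mul, vec8_0_s6, vec8_1_s6, vec8_2_s6, vec8_3_s6, vec8_4_s6, vec8_5_s6, vec8_6_s6, vec8_7_s6]
    norm_num
    linear_combination (0:ℝ)*ha
  · simp (config := { decide := true }) only [normLap, adjOfList, cycle8E, Matrix.mulVec,
    dotProduct, Fin.sum_univ_eight, Matrix.sub_apply, Matrix.one_apply, Matrix.of_apply,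
    List.cons_append, List.nil_append, List.mem_cons, List.not_mem_nil, Prod.mk.injEq,
    Pi.smul_apply, smul_eq_mul, vec8_0_s6, vec8_1_s6, vec8_2_s6, vec8_3_s6, vec8_4_s6, vec8_5_s6, vec8_6_s6, vec8_7_s6]
    norm_num
    rw [inv_sqrt_two, inv_sqrt_three]
    linear_combination ((-1/6:ℝ)*a) * hb

/-- `1 - √((7+√33)/24)` is a nonzero eigenvalue (< 7/25) of the normalized Laplacian of 𝒢⁺. -/
private lemma memGp : ∃ μ : ℝ, (μ ≠ 0 ∧ ∃ v : Fin 8 → ℝ, v ≠ 0 ∧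
    (normLap (adjOfList (cycle8E ++ [(0,3),(4,7)]))).mulVec v = μ • v) ∧ μ < 7/25 := by
  set a := Real.sqrt 2 with ha_def
  set b := Real.sqrt 3 with hb_def
  set s := Real.sqrt 33 with hs_def
  set t := Real.sqrt ((7 + s)/24) with ht_def
  have ha : a * a = 2 := Real.mul_self_sqrt (by norm_num)
  have hb : b * b = 3 := Real.mul_self_sqrt (by norm_num)
  have hs0 : 0 ≤ s := Real.sqrt_nonneg _
  have hs : s * s = 33 := Real.mul_self_sqrt (by norm_num)
  have ht' : t * t = (7 + s)/24 := Real.mul_self_sqrt (by positivity)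
  have ht : 24 * (t * t) = 7 + s := by rw [ht']; ring
  have ht0 : 0 < t := Real.sqrt_pos.mpr (by positivity)
  have hbpos : 0 < b := Real.sqrt_pos.mpr (by norm_num)
  refine ⟨1 - t, ⟨?_, ![24*b*t, 21*a+3*a*s, 18*a*t+6*a*s*t, 6*b+2*b*s,
      -(24*b*t), -(21*a+3*a*s), -(18*a*t+6*a*s*t), -(6*b+2*b*s)],
      Function.ne_iff.mpr ⟨0, by simpa using (by positivity : (0:ℝ) < 24*b*t).ne'⟩, ?_⟩, ?_⟩
  · intro h
    have hteq : t = 1 := by linarith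
    rw [hteq] at ht
    nlinarith
  · funext i
    fin_cases i
    · simp (config := { decide := true }) only [normLap, adjOfList, cycle8E, Matrix.mulVec,
    dotProduct, Fin.sum_univ_eight, Matrix.sub_apply, Matrix.one_apply, Matrix.of_apply,
    List.cons_append, List.nil_append, List.mem_cons, List.not_mem_nil, Prod.mk.injEq,
    Pi.smul_apply, smul_eq_mul, vec8_0_s6, vec8_1_s6, vec8_2_s6, vec8_3_s6, vec8_4_s6, vec8_5_s6, vec8_6_s6, vec8_7_s6]
      norm_num
      rw [inv_sqrt_two, inv_sqrt_three]
      linear_combination ((-7/2:ℝ)*b + (-1/2:ℝ)*b*s) * ha + (b) * ht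
    · simp (config := { decide := true }) only [normLap, adjOfList, cycle8E, Matrix.mulVec,
    dotProduct, Fin.sum_univ_eight, Matrix.sub_apply, Matrix.one_apply, Matrix.of_apply,
    List.cons_append, List.nil_append, List.mem_cons, List.not_mem_nil, Prod.mk.injEq,
    Pi.smul_apply, smul_eq_mul, vec8_0_s6, vec8_1_s6, vec8_2_s6, vec8_3_s6, vec8_4_s6, vec8_5_s6, vec8_6_s6, vec8_7_s6]
      norm_num
      rw [inv_sqrt_two, inv_sqrt_three]
      linear_combination ((-4:ℝ)*a*t) * hb
    · simp (config := { decide := true }) only [normLap, adjOfList, cycle8E, Matrix.mulVec,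
    dotProduct, Fin.sum_univ_eight, Matrix.sub_apply, Matrix.one_apply, Matrix.of_apply,
    List.cons_append, List.nil_append, List.mem_cons, List.not_mem_nil, Prod.mk.injEq,
    Pi.smul_apply, smul_eq_mul, vec8_0_s6, vec8_1_s6, vec8_2_s6, vec8_3_s6, vec8_4_s6, vec8_5_s6, vec8_6_s6, vec8_7_s6]
      norm_num
      rw [inv_sqrt_two, inv_sqrt_three]
      linear_combination ((-1:ℝ)*a + (-1/3:ℝ)*a*s) * hb + ((1/4:ℝ)*a) * hs + ((3/4:ℝ)*a + (1/4:ℝ)*a*s) * ht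
    · simp (config := { decide := true }) only [normLap, adjOfList, cycle8E, Matrix.mulVec,
    dotProduct, Fin.sum_univ_eight, Matrix.sub_apply, Matrix.one_apply, Matrix.of_apply,
    List.cons_append, List.nil_append, List.mem_cons, List.not_mem_nil, Prod.mk.injEq,
    Pi.smul_apply, smul_eq_mul, vec8_0_s6, vec8_1_s6, vec8_2_s6, vec8_3_s6, vec8_4_s6, vec8_5_s6, vec8_6_s6, vec8_7_s6]
      norm_num
      rw [inv_sqrt_two, inv_sqrt_three]
      linear_combination ((-3:ℝ)*b*t + (-1:ℝ)*b*s*t) * ha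
    · simp (config := { decide := true }) only [normLap, adjOfList, cycle8E, Matrix.mulVec,
    dotProduct, Fin.sum_univ_eight, Matrix.sub_apply, Matrix.one_apply, Matrix.of_apply,
    List.cons_append, List.nil_append, List.mem_cons, List.not_mem_nil, Prod.mk.injEq,
    Pi.smul_apply, smul_eq_mul, vec8_0_s6, vec8_1_s6, vec8_2_s6, vec8_3_s6, vec8_4_s6, vec8_5_s6, vec8_6_s6, vec8_7_s6]
      norm_num
      rw [inv_sqrt_two, inv_sqrt_three]
      linear_combination ((7/2:ℝ)*b + (1/2:ℝ)*b*s) * ha + ((-1:ℝ)*b) * ht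
    · simp (config := { decide := true }) only [normLap, adjOfList, cycle8E, Matrix.mulVec,
    dotProduct, Fin.sum_univ_eight, Matrix.sub_apply, Matrix.one_apply, Matrix.of_apply,
    List.cons_append, List.nil_append, List.mem_cons, List.not_mem_nil, Prod.mk.injEq,
    Pi.smul_apply, smul_eq_mul, vec8_0_s6, vec8_1_s6, vec8_2_s6, vec8_3_s6, vec8_4_s6, vec8_5_s6, vec8_6_s6, vec8_7_s6]
      norm_num
      rw [inv_sqrt_two, inv_sqrt_three]
      linear_combination ((4:ℝ)*a*t) * hb
    · simp (config := { decide := true }) only [normLap, adjOfList, cycle8E, Matrix.mulVec,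
    dotProduct, Fin.sum_univ_eight, Matrix.sub_apply, Matrix.one_apply, Matrix.of_apply,
    List.cons_append, List.nil_append, List.mem_cons, List.not_mem_nil, Prod.mk.injEq,
    Pi.smul_apply, smul_eq_mul, vec8_0_s6, vec8_1_s6, vec8_2_s6, vec8_3_s6, vec8_4_s6, vec8_5_s6, vec8_6_s6, vec8_7_s6]
      norm_num
      rw [inv_sqrt_two, inv_sqrt_three]
      linear_combination (a + (1/3:ℝ)*a*s) * hb + ((-1/4:ℝ)*a) * hs + ((-3/4:ℝ)*a + (-1/4:ℝ)*a*s) * ht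
    · simp (config := { decide := true }) only [normLap, adjOfList, cycle8E, Matrix.mulVec,
    dotProduct, Fin.sum_univ_eight, Matrix.sub_apply, Matrix.one_apply, Matrix.of_apply,
    List.cons_append, List.nil_append, List.mem_cons, List.not_mem_nil, Prod.mk.injEq,
    Pi.smul_apply, smul_eq_mul, vec8_0_s6, vec8_1_s6, vec8_2_s6, vec8_3_s6, vec8_4_s6, vec8_5_s6, vec8_6_s6, vec8_7_s6]
      norm_num
      rw [inv_sqrt_two, inv_sqrt_three]
      linear_combination ((3:ℝ)*b*t + b*s*t) * ha
  · nlinarith [ht, hs, hs0, ht0.le, sq_nonneg (t - 18/25), sq_nonneg (s - 57/10)]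

/-- Adding edge {4,7} to the 8-cycle-plus-chord graph 𝒢 strictly decreases the spectral
gap of the normalized Laplacian. -/
theorem addition_decreases_gap :
    spectralGap (normLap (adjOfList (cycle8E ++ [(0,3),(4,7)]))) <
      spectralGap (normLap (adjOfList (cycle8E ++ [(0,3)]))) := by
  unfold spectralGap
  obtain ⟨μ₁, hμ₁mem, hμ₁lt⟩ := memGp
  have hbdd : BddBelow {μ : ℝ | μ ≠ 0 ∧ ∃ v : Fin 8 → ℝ, v ≠ 0 ∧
      (normLap (adjOfList (cycle8E ++ [(0,3),(4,7)]))).mulVec v = μ • v} := by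
    refine ⟨0, fun μ hμ => ?_⟩
    obtain ⟨hne, v, hv0, hv⟩ := hμ
    exact nonnegGp μ v hv0 hv
  have h1 : sInf {μ : ℝ | μ ≠ 0 ∧ ∃ v : Fin 8 → ℝ, v ≠ 0 ∧
      (normLap (adjOfList (cycle8E ++ [(0,3),(4,7)]))).mulVec v = μ • v} ≤ μ₁ :=
    csInf_le hbdd hμ₁mem
  have h2 : (7:ℝ)/25 ≤ sInf {μ : ℝ | μ ≠ 0 ∧ ∃ v : Fin 8 → ℝ, v ≠ 0 ∧
      (normLap (adjOfList (cycle8E ++ [(0,3)]))).mulVec v = μ • v} := by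
    refine le_csInf ⟨2, memG2⟩ fun μ hμ => ?_
    obtain ⟨hne, v, hv0, hv⟩ := hμ
    exact lowerG μ v hne hv0 hv
  linarith
end

section
/- With the quantities $P^2 = \left(\frac{\sqrt{3}-\sqrt{2}}{\sqrt{18}}\right)^2 \cdot \frac{3+2\sqrt{2}}{40}$, $\lambda = 1 - \frac{\sqrt{2}}{2}$, the quantity $g = -P^2 \lambda - \sqrt{2}\left(1 - \sqrt{\tfrac{2}{3}}\right)\cdot \frac{3}{40} + \frac{2}{3}\cdot\frac{\sqrt{2}}{40}$ satisfies $g > 0$. -/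
/-!
Since `√18 = 3√2` and `√(2/3) = √2√3/3`, the quantity `g` lies in `ℚ(√2, √3)`; reducing with
`√2² = 2` and `√3² = 3` gives `1440 g = √3 (76 + 4√2) - (89√2 + 10)`. Both terms are positive and
their squares differ by `1482 + 44√2 > 0`.
-/

open Real

theorem sqrt_eighteen : √18 = 3 * √2 := by
  rw [show (18 : ℝ) = 3 ^ 2 * 2 by norm_num, sqrt_mul (by positivity), sqrt_sq (by norm_num)]

theorem sqrt_two_div_three : √(2 / 3) = √2 * √3 / 3 := by
  rw [sqrt_div' _ zero_le_three]
  field_simp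
  simp

theorem eldan_g_eq {a b : ℝ} (ha : a ^ 2 = 2) (hb : b ^ 2 = 3) :
    -(((b - a) / (3 * a)) ^ 2 * ((3 + 2 * a) / 40)) * (1 - a / 2) - a * (1 - a * b / 3) * (3 / 40)
      + 2 / 3 * (a / 40) = (b * (76 + 4 * a) - (89 * a + 10)) / 1440 := by
  have hsq : ((b - a) / (3 * a)) ^ 2 = (5 - 2 * a * b) / 18 := by
    rw [div_pow, mul_pow, ha, div_eq_div_iff (by norm_num) (by norm_num)]
    linear_combination 18 * hb + 18 * ha
  have hlam : (3 + 2 * a) * (1 - a / 2) = (2 + a) / 2 := by linear_combination -ha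
  calc _ = -((5 - 2 * a * b) / 18 * ((3 + 2 * a) * (1 - a / 2)) / 40)
        - a * (1 - a * b / 3) * (3 / 40) + 2 / 3 * (a / 40) := by rw [hsq]; ring
    _ = _ := by rw [hlam]; linear_combination (38 * b / 1440) * ha

theorem eighty_nine_mul_sqrt_two_add_ten_lt : 89 * √2 + 10 < √3 * (76 + 4 * √2) := by
  have h2 : √2 ^ 2 = 2 := sq_sqrt zero_le_two
  have h3 : √3 ^ 2 = 3 := sq_sqrt zero_le_three
  have hdiff : (√3 * (76 + 4 * √2)) ^ 2 - (89 * √2 + 10) ^ 2 = 1482 + 44 * √2 := by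
    linear_combination (76 + 4 * √2) ^ 2 * h3 + (16 * 3 - 89 ^ 2) * h2
  refine lt_of_pow_lt_pow_left₀ 2 (by positivity) ?_
  linarith [sqrt_nonneg 2]

/-- The numerical core of Eldan's criterion `g(0,3,R₈) > 0` for the 8-cycle with
candidate edge {0,3}. -/
theorem eldan_criterion_positive :
    let P2 : ℝ := ((Real.sqrt 3 - Real.sqrt 2) / Real.sqrt 18) ^ 2 * ((3 + 2 * Real.sqrt 2) / 40)
    let lam : ℝ := 1 - Real.sqrt 2 / 2
    let g : ℝ := -P2 * lam - Real.sqrt 2 * (1 - Real.sqrt (2 / 3)) * (3 / 40)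
        + (2 / 3) * (Real.sqrt 2 / 40)
    g > 0 := by
  intro P2 lam g
  have hg : g = (√3 * (76 + 4 * √2) - (89 * √2 + 10)) / 1440 := by
    simp only [g, P2, lam, sqrt_eighteen, sqrt_two_div_three]
    exact eldan_g_eq (sq_sqrt zero_le_two) (sq_sqrt zero_le_three)
  rw [hg]
  exact div_pos (sub_pos.2 eighty_nine_mul_sqrt_two_add_ten_lt) (by norm_num)
end
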